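/- The 3-uniform hypergraph 35-35e is isomorphic to its dual hypergraph: there exists a bijection φ from the vertex set of 35-35e to its edge set such that for every edge e of 35-35e, the set {φ(v) : v ∈ e} of three edges has a common vertex w with φ-image relation reversed, i.e., φ induces an isomorphism between 35-35e and the hypergraph whose vertices are the edges of 35-35e and whose edges are, for each vertex v of 35-35e, the set of edges of 35-35e containing v. -/
import Mathlib


/-- The edges of the hypergraph 35-35e, as a finset of 3-element subsets of `Fin 35`. -/
def E3535e : Finset (Finset (Fin 35)) :=
  ([{32, 33, 34}, {34, 2, 16}, {16, 17, 28}, {28, 19, 18}, {18, 0, 30},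
   {30, 13, 7}, {7, 27, 6}, {6, 1, 20}, {20, 21, 22}, {22, 3, 11},
   {11, 14, 29}, {29, 15, 9}, {9, 8, 26}, {26, 4, 5}, {5, 31, 12},
   {12, 10, 32}, {29, 30, 31}, {26, 27, 28}, {23, 24, 25}, {15, 17, 25},
   {14, 19, 24}, {13, 17, 22}, {12, 19, 21}, {10, 11, 27}, {3, 5, 23},
   {2, 7, 23}, {0, 4, 20}, {2, 9, 21}, {0, 10, 25}, {1, 8, 24},
   {1, 16, 31}, {3, 18, 33}, {8, 13, 32}, {6, 15, 33}, {4, 14, 34}] : List (Finset (Fin 35))).toFinset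



set_option maxRecDepth 8000
set_option maxHeartbeats 2000000

def phi0 : Fin 35 → Finset (Fin 35) := ![{34,2,16}, {3,18,33}, {0,10,25}, {1,8,24}, {4,14,34}, {14,19,24}, {6,15,33}, {15,17,25}, {22,3,11}, {10,11,27}, {2,9,21}, {9,8,26}, {12,19,21}, {13,17,22}, {26,4,5}, {7,27,6}, {18,0,30}, {30,13,7}, {1,16,31}, {5,31,12}, {32,33,34}, {12,10,32}, {8,13,32}, {23,24,25}, {3,5,23}, {2,7,23}, {11,14,29}, {29,15,9}, {29,30,31}, {26,27,28}, {16,17,28}, {28,19,18}, {20,21,22}, {6,1,20}, {0,4,20}]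

/-- The edges of 35-35e as an indexed family. -/
def eL : Fin 35 → Finset (Fin 35) := ![{32,33,34}, {34,2,16}, {16,17,28}, {28,19,18}, {18,0,30}, {30,13,7}, {7,27,6}, {6,1,20}, {20,21,22}, {22,3,11}, {11,14,29}, {29,15,9}, {9,8,26}, {26,4,5}, {5,31,12}, {12,10,32}, {29,30,31}, {26,27,28}, {23,24,25}, {15,17,25}, {14,19,24}, {13,17,22}, {12,19,21}, {10,11,27}, {3,5,23}, {2,7,23}, {0,4,20}, {2,9,21}, {0,10,25}, {1,8,24}, {1,16,31}, {3,18,33}, {8,13,32}, {6,15,33}, {4,14,34}]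

/-- Witness vertex for each edge index. -/
def wit : Fin 35 → Fin 35 := ![20, 0, 30, 31, 16, 17, 15, 33, 32, 8, 26, 27, 11, 14, 19, 21, 28, 29, 23, 7, 5, 13, 12, 9, 24, 25, 34, 10, 2, 3, 18, 1, 22, 6, 4]

lemma phi0_inj : Function.Injective phi0 := by decide

lemma phi0_img : Finset.univ.image phi0 = E3535e := by decide

lemma eL_img : Finset.univ.image eL = E3535e := by decide

lemma key : ∀ i : Fin 35, (eL i).image phi0 = E3535e.filter (fun e => wit i ∈ e) := by decide

lemma phi0_bwd : ∀ v : Fin 35,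
    (Finset.univ.filter (fun x => phi0 x ∈ E3535e.filter (fun e => v ∈ e))) ∈ E3535e := by
  decide

/-- The hypergraph 35-35e is isomorphic to its dual: there is a bijection `φ` from the
vertices of 35-35e onto its edges such that a set `s` of vertices is an edge of 35-35e
iff its image under `φ` is an edge of the dual hypergraph, i.e. iff there is a vertex
`v` such that `s.image φ` is exactly the set of edges of 35-35e containing `v`. -/
theorem E3535e_self_dual :
    ∃ φ : Fin 35 → Finset (Fin 35),
      Set.BijOn φ Set.univ (E3535e : Set (Finset (Fin 35))) ∧
        ∀ s : Finset (Fin 35),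
          s ∈ E3535e ↔ ∃ v : Fin 35, s.image φ = E3535e.filter (fun e => v ∈ e) := by
  have hmem : ∀ x, phi0 x ∈ E3535e := by
    intro x
    rw [← phi0_img]
    exact Finset.mem_image_of_mem _ (Finset.mem_univ x)
  refine ⟨phi0, ⟨fun x _ => hmem x, fun x _ y _ h => phi0_inj h, ?_⟩, fun s => ⟨?_, ?_⟩⟩
  · intro e he
    rw [← phi0_img, Finset.coe_image] at he
    obtain ⟨v, _, hv⟩ := he
    exact ⟨v, Set.mem_univ v, hv⟩
  · intro hs
    rw [← eL_img] at hs
    obtain ⟨i, _, hi⟩ := Finset.mem_image.mp hs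
    exact ⟨wit i, by rw [← hi]; exact key i⟩
  · rintro ⟨v, hv⟩
    have hs : s = Finset.univ.filter (fun x => phi0 x ∈ E3535e.filter (fun e => v ∈ e)) := by
      ext x
      simp only [Finset.mem_filter, Finset.mem_univ, true_and, ← hv, Finset.mem_image]
      constructor
      · intro hx; exact ⟨x, hx, rfl⟩
      · rintro ⟨y, hy, h⟩; rwa [← phi0_inj h]
    rw [hs]
    exact phi0_bwd v
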